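/- Given n dyadic filtrations A_1,...,A_n of R^n, there exist cubes Q_m in A_m of side length 1 (one from each filtration) whose boundaries have a common point: ∩_{m=1}^n ∂Q_m ≠ ∅. -/

import Mathlib

open MeasureTheory

/-- An axis-parallel half-open cube in `ℝⁿ`, given by its lower corner `c`
and its side length `s`. -/
structure Cube (n : ℕ) where
  c : EuclideanSpace ℝ (Fin n)
  s : ℝ

/-- The set of points of a cube: `∏ᵢ [cᵢ, cᵢ + s)`. -/
def Cube.set {n : ℕ} (Q : Cube n) : Set (EuclideanSpace ℝ (Fin n)) :=
  {y | ∀ i, Q.c i ≤ y i ∧ y i < Q.c i + Q.s}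

/-- The concentric dilate `tQ` of a cube `Q`. -/
noncomputable def Cube.dilate {n : ℕ} (Q : Cube n) (t : ℝ) : Cube n :=
  ⟨WithLp.toLp 2 (fun i => Q.c i - (t - 1) * Q.s / 2), t * Q.s⟩

/-- A dyadic filtration of `ℝⁿ`: every cube has side length `2^{-k}` for some
`k ∈ ℤ`, the cubes of each generation `k` partition `ℝⁿ`, and any two cubes
of the family are nested or disjoint. -/
def IsDyadicFiltration {n : ℕ} (F : Set (Cube n)) : Prop :=
  (∀ Q ∈ F, ∃ k : ℤ, Q.s = (2 : ℝ) ^ (-k)) ∧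
  (∀ k : ℤ, ∀ x : EuclideanSpace ℝ (Fin n),
    ∃! Q : Cube n, Q ∈ F ∧ Q.s = (2 : ℝ) ^ (-k) ∧ x ∈ Q.set) ∧
  (∀ Q ∈ F, ∀ Q' ∈ F, Q.set ⊆ Q'.set ∨ Q'.set ⊆ Q.set ∨ Q.set ∩ Q'.set = ∅)

/-- `pn n` is the smallest odd integer strictly greater than `n`. -/
def pn (n : ℕ) : ℕ := if n % 2 = 0 then n + 1 else n + 2

/-- The covering constant `c_n = 2 pₙ √n` of Theorem A. -/
noncomputable def cN (n : ℕ) : ℝ := 2 * pn n * Real.sqrt n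

/-- The dyadic (nondoubling) maximal function associated to a family `A` of
cubes: `M f (x) = sup_{x ∈ Q ∈ A} μ(2Q)⁻¹ ∫_Q |f| dμ`. -/
noncomputable def maxFn {n : ℕ} (μ : Measure (EuclideanSpace ℝ (Fin n)))
    (A : Set (Cube n)) (f : EuclideanSpace ℝ (Fin n) → ℝ)
    (x : EuclideanSpace ℝ (Fin n)) : ENNReal :=
  ⨆ Q ∈ A, ⨆ _ : x ∈ Q.set,
    (μ (Q.dilate 2).set)⁻¹ * ∫⁻ y in Q.set, ENNReal.ofReal |f y| ∂μ

open Classical in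
/-- Weights `w_j = χ_{Q_j} / ∑ₖ χ_{Q_k}`. -/
noncomputable def wfun {n J : ℕ} (Q : Fin J → Cube n) (j : Fin J)
    (x : EuclideanSpace ℝ (Fin n)) : ℝ :=
  (if x ∈ (Q j).set then (1 : ℝ) else 0) /
    (∑ i : Fin J, if x ∈ (Q i).set then (1 : ℝ) else 0)

/-! Inside one cube `R` of a dyadic filtration, the cubes of any finer generation form the standard
grid based at the corner of `R`; across different cubes of the same generation nothing of the
kind holds. So we first find a point `x` lying, together with its sup-norm ball of radius `1`,
inside a single cube of side `≥ 1` of every filtration: choose the cubes one filtration at a time,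
with decreasing side lengths, always re-centring at the centre of the last cube chosen. Let
`p` be the point whose `i`-th coordinate is the `i`-th lower corner coordinate of the unit cube of
`𝒜 i` containing `x`. Since the unit cubes of `𝒜 m` near `x` lie on one grid, the unit cube of
`𝒜 m` containing `p` has `p` on its face orthogonal to the `m`-th axis. -/

open Filter Topology

namespace Cube

variable {n : ℕ}

theorem c_mem_set {Q : Cube n} (hQ : 0 < Q.s) : Q.c ∈ Q.set :=
  fun _ => ⟨le_rfl, lt_add_of_pos_right _ hQ⟩

theorem le_c_and_add_s_le_of_subset {Q R : Cube n} (hQ : 0 < Q.s) (h : Q.set ⊆ R.set)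
    (i : Fin n) : R.c i ≤ Q.c i ∧ Q.c i + Q.s ≤ R.c i + R.s := by
  refine ⟨(h (c_mem_set hQ) i).1, le_of_forall_lt fun a ha => ?_⟩
  set t := max (a - Q.c i) 0
  have ht : t < Q.s := max_lt (by linarith) hQ
  have hmem : Q.c + EuclideanSpace.single i t ∈ Q.set := by
    intro j
    by_cases hj : j = i
    · subst hj
      simp only [PiLp.add_apply, PiLp.single_apply, if_true]
      exact ⟨le_add_of_nonneg_right (le_max_right _ _), by linarith⟩
    · simp only [PiLp.add_apply, PiLp.single_apply, if_neg hj, add_zero]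
      exact c_mem_set hQ j
  have := (h hmem i).2
  simp only [PiLp.add_apply, PiLp.single_apply, if_true] at this
  linarith [le_max_left (a - Q.c i) 0]

theorem mem_frontier_of_apply_eq {Q : Cube n} {p : EuclideanSpace ℝ (Fin n)} (hp : p ∈ Q.set)
    {i : Fin n} (hpi : p i = Q.c i) : p ∈ frontier Q.set := by
  refine ⟨subset_closure hp, fun hint => ?_⟩
  have hcont : Continuous fun t : ℝ => p + t • EuclideanSpace.single i (1 : ℝ) := by fun_prop
  have hnhds : ∀ᶠ t in 𝓝 (0 : ℝ), p + t • EuclideanSpace.single i (1 : ℝ) ∈ Q.set := by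
    refine (hcont.tendsto' 0 p (by simp)).eventually (mem_of_superset ?_ interior_subset)
    exact isOpen_interior.mem_nhds hint
  obtain ⟨t, hmem, ht⟩ := ((hnhds.filter_mono nhdsWithin_le_nhds).and
    (self_mem_nhdsWithin : Set.Iio (0 : ℝ) ∈ 𝓝[<] 0)).exists
  have := (hmem i).1
  simp only [PiLp.add_apply, PiLp.smul_apply, PiLp.single_apply, if_true, hpi, smul_eq_mul,
    mul_one] at this
  linarith

end Cube

namespace IsDyadicFiltration

variable {n : ℕ} {F : Set (Cube n)}

theorem side_pos (hF : IsDyadicFiltration F) {Q : Cube n} (hQ : Q ∈ F) : 0 < Q.s := by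
  obtain ⟨k, hk⟩ := hF.1 Q hQ
  rw [hk]
  positivity

theorem exists_mem_side_eq (hF : IsDyadicFiltration F) (k : ℤ) (x : EuclideanSpace ℝ (Fin n)) :
    ∃ Q ∈ F, Q.s = 2 ^ k ∧ x ∈ Q.set := by
  obtain ⟨Q, ⟨hQ, hs, hx⟩, -⟩ := hF.2.1 (-k) x
  exact ⟨Q, hQ, by rwa [neg_neg] at hs, hx⟩

theorem exists_mem_side_eq_two_pow_mul (hF : IsDyadicFiltration F) {Q : Cube n} (hQ : Q ∈ F)
    (N : ℕ) (x : EuclideanSpace ℝ (Fin n)) : ∃ P ∈ F, P.s = 2 ^ N * Q.s ∧ x ∈ P.set := by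
  obtain ⟨k, hk⟩ := hF.1 Q hQ
  obtain ⟨P, hP, hs, hx⟩ := hF.exists_mem_side_eq (N - k) x
  refine ⟨P, hP, ?_, hx⟩
  rw [hs, hk, sub_eq_add_neg, zpow_add₀ two_ne_zero, zpow_natCast]

theorem eq_of_side_eq (hF : IsDyadicFiltration F) {Q Q' : Cube n} (hQ : Q ∈ F) (hQ' : Q' ∈ F)
    (hs : Q.s = Q'.s) {x : EuclideanSpace ℝ (Fin n)} (hx : x ∈ Q.set) (hx' : x ∈ Q'.set) :
    Q = Q' := by
  obtain ⟨k, hk⟩ := hF.1 Q hQ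
  exact (hF.2.1 k x).unique ⟨hQ, hk, hx⟩ ⟨hQ', hs ▸ hk, hx'⟩

theorem subset_of_side_le (hF : IsDyadicFiltration F) {Q R : Cube n} (hQ : Q ∈ F) (hR : R ∈ F)
    (hs : Q.s ≤ R.s) {x : EuclideanSpace ℝ (Fin n)} (hxQ : x ∈ Q.set) (hxR : x ∈ R.set) :
    Q.set ⊆ R.set := by
  rcases hF.2.2 Q hQ R hR with h | h | h
  · exact h
  · rcases isEmpty_or_nonempty (Fin n) with hn | ⟨⟨i⟩⟩
    · exact fun _ _ j => isEmptyElim j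
    · have := Cube.le_c_and_add_s_le_of_subset (hF.side_pos hR) h i
      rw [hF.eq_of_side_eq hQ hR (by linarith) hxQ hxR]
  · exact absurd (Set.mem_inter hxQ hxR) (h ▸ Set.notMem_empty x)

theorem c_eq_or_eq_add_of_subset (hF : IsDyadicFiltration F) {P R : Cube n} (hP : P ∈ F)
    (hR : R ∈ F) (hPR : P.set ⊆ R.set) (hs : R.s = 2 * P.s) (i : Fin n) :
    P.c i = R.c i ∨ P.c i = R.c i + P.s := by
  have hP0 := hF.side_pos hP
  have hb := Cube.le_c_and_add_s_le_of_subset hP0 hPR i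
  by_cases hle : R.c i + P.s ≤ P.c i
  · exact Or.inr (by linarith)
  refine Or.inl ?_
  -- The cube of `P`'s generation through the corner of `P` slid onto the face `x i = R.c i`
  -- of `R` contains the corner of `P`, so it is `P`.
  set z := P.c + EuclideanSpace.single i (R.c i - P.c i)
  have hz : ∀ j, j ≠ i → z j = P.c j := fun j hj => by simp [z, hj]
  have hzi : z i = R.c i := by simp [z]
  have hzR : z ∈ R.set := by
    intro j
    by_cases hj : j = i
    · subst hj
      rw [hzi]
      constructor <;> linarith
    · rw [hz j hj]
      exact hPR (Cube.c_mem_set hP0) j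
  obtain ⟨P', hP', hs', hzP'⟩ := hF.exists_mem_side_eq_two_pow_mul hP 0 z
  rw [pow_zero, one_mul] at hs'
  have hP'R := hF.subset_of_side_le hP' hR (by linarith) hzP' hzR
  have hP'i : P'.c i = R.c i :=
    le_antisymm (hzi ▸ (hzP' i).1) (Cube.le_c_and_add_s_le_of_subset (hF.side_pos hP') hP'R i).1
  have hcP' : P.c ∈ P'.set := by
    intro j
    by_cases hj : j = i
    · subst hj
      rw [hP'i, hs']
      constructor <;> linarith
    · simpa only [hz j hj] using hzP' j
  rw [hF.eq_of_side_eq hP hP' hs'.symm (Cube.c_mem_set hP0) hcP', hP'i]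

theorem exists_c_eq_add_int_mul_of_side_eq_two_pow_mul (hF : IsDyadicFiltration F) {Q : Cube n}
    (hQ : Q ∈ F) (i : Fin n) (N : ℕ) :
    ∀ R ∈ F, R.s = 2 ^ N * Q.s → Q.set ⊆ R.set → ∃ t : ℤ, Q.c i = R.c i + t * Q.s := by
  have hQ0 := hF.side_pos hQ
  have hcQ := Cube.c_mem_set hQ0
  induction N with
  | zero =>
    intro R hR hs hQR
    rw [pow_zero, one_mul] at hs
    exact ⟨0, by rw [hF.eq_of_side_eq hQ hR hs.symm hcQ (hQR hcQ)]; simp⟩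
  | succ N ih =>
    intro R hR hs hQR
    obtain ⟨P, hP, hPs, hcP⟩ := hF.exists_mem_side_eq_two_pow_mul hQ N Q.c
    have hpow : (1 : ℝ) ≤ 2 ^ N := one_le_pow₀ one_le_two
    have hQP := hF.subset_of_side_le hQ hP (by rw [hPs]; nlinarith) hcQ hcP
    have hPR := hF.subset_of_side_le hP hR (by rw [hPs, hs, pow_succ]; nlinarith) hcP (hQR hcQ)
    obtain ⟨t, ht⟩ := ih P hP hPs hQP
    rcases hF.c_eq_or_eq_add_of_subset hP hR hPR (by rw [hs, hPs, pow_succ]; ring) i with h | h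
    · exact ⟨t, by rw [ht, h]⟩
    · exact ⟨t + 2 ^ N, by rw [ht, h, hPs]; push_cast; ring⟩

theorem exists_c_eq_add_int_mul (hF : IsDyadicFiltration F) {Q R : Cube n} (hQ : Q ∈ F)
    (hR : R ∈ F) (hQR : Q.set ⊆ R.set) (i : Fin n) : ∃ t : ℤ, Q.c i = R.c i + t * Q.s := by
  obtain ⟨a, ha⟩ := hF.1 Q hQ
  obtain ⟨b, hb⟩ := hF.1 R hR
  have hle : Q.s ≤ R.s := by
    linarith [Cube.le_c_and_add_s_le_of_subset (hF.side_pos hQ) hQR i]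
  rw [ha, hb, zpow_le_zpow_iff_right₀ one_lt_two] at hle
  refine hF.exists_c_eq_add_int_mul_of_side_eq_two_pow_mul hQ i (a - b).toNat R hR ?_ hQR
  rw [hb, ha, ← zpow_natCast, Int.toNat_of_nonneg (by omega), ← zpow_add₀ two_ne_zero]
  ring_nf

theorem c_eq_of_subset_of_mem_Ico (hF : IsDyadicFiltration F) {Q Q' R : Cube n} (hQ : Q ∈ F)
    (hQ' : Q' ∈ F) (hR : R ∈ F) (hQR : Q.set ⊆ R.set) (hQ'R : Q'.set ⊆ R.set) (hs : Q'.s = Q.s)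
    (i : Fin n) (h : Q'.c i ∈ Set.Ico (Q.c i) (Q.c i + Q.s)) : Q'.c i = Q.c i := by
  obtain ⟨t, ht⟩ := hF.exists_c_eq_add_int_mul hQ hR hQR i
  obtain ⟨t', ht'⟩ := hF.exists_c_eq_add_int_mul hQ' hR hQ'R i
  have hQ0 := hF.side_pos hQ
  have hd : ((t' - t : ℤ) : ℝ) * Q.s = Q'.c i - Q.c i := by
    rw [ht, ht', hs]
    push_cast
    ring
  have h0 : (0 : ℝ) ≤ ((t' - t : ℤ) : ℝ) := by
    by_contra! hneg
    nlinarith [h.1]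
  have h1 : ((t' - t : ℤ) : ℝ) < 1 := by
    by_contra! hge
    nlinarith [h.2]
  have h0' : (0 : ℤ) ≤ t' - t := by exact_mod_cast h0
  have h1' : t' - t < 1 := by exact_mod_cast h1
  rw [ht, ht', hs, show t' = t by omega]

end IsDyadicFiltration

theorem exists_nearby_box_subset_cube_of_each {n k : ℕ} (𝒜 : Fin k → Set (Cube n))
    (h𝒜 : ∀ m, IsDyadicFiltration (𝒜 m)) (r : ℝ) :
    ∃ B : ℝ, ∀ y : EuclideanSpace ℝ (Fin n), ∃ x : EuclideanSpace ℝ (Fin n),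
      (∀ i, |x i - y i| ≤ B) ∧ ∀ m, ∃ R ∈ 𝒜 m, 1 ≤ R.s ∧
        ∀ z : EuclideanSpace ℝ (Fin n), (∀ i, |z i - x i| ≤ r) → z ∈ R.set := by
  induction k with
  | zero => exact ⟨0, fun y => ⟨y, by simp, fun m => m.elim0⟩⟩
  | succ k ih =>
    obtain ⟨B, hB⟩ := ih (fun m => 𝒜 m.succ) (fun m => h𝒜 m.succ)
    -- a point within `B` of the centre of a cube of side `2 ^ N` is `r`-deep in it
    obtain ⟨N, hN⟩ := pow_unbounded_of_one_lt (2 * (B + r)) (one_lt_two : (1 : ℝ) < 2)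
    refine ⟨B + 2 ^ N, fun y => ?_⟩
    obtain ⟨R, hR, hRs, hyR⟩ := (h𝒜 0).exists_mem_side_eq N y
    rw [zpow_natCast] at hRs
    obtain ⟨x, hxc, hx⟩ := hB (WithLp.toLp 2 fun i => R.c i + 2 ^ N / 2)
    have hxR : ∀ i, |x i - (R.c i + 2 ^ N / 2)| ≤ B := hxc
    refine ⟨x, fun i => ?_, Fin.cases ⟨R, hR, ?_, fun z hz i => ?_⟩ hx⟩
    · have := abs_le.1 (hxR i)
      have := hyR i
      rw [hRs] at this
      rw [abs_le]
      constructor <;> linarith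
    · rw [hRs]
      exact one_le_pow₀ one_le_two
    · have := abs_le.1 (hxR i)
      have := abs_le.1 (hz i)
      rw [hRs]
      constructor <;> linarith

/-- Given `n` dyadic filtrations of `ℝⁿ`, one can choose a unit cube from each
filtration so that their boundaries have a common point. -/
theorem stmt_8 (n : ℕ) (𝒜 : Fin n → Set (Cube n))
    (h𝒜 : ∀ m, IsDyadicFiltration (𝒜 m)) :
    ∃ Q : Fin n → Cube n,
      (∀ m, Q m ∈ 𝒜 m ∧ (Q m).s = 1) ∧
      (⋂ m, frontier (Q m).set).Nonempty := by
  obtain ⟨_, hdeep⟩ := exists_nearby_box_subset_cube_of_each 𝒜 h𝒜 1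
  obtain ⟨x, -, hx⟩ := hdeep 0
  choose R hR hR1 hxR using hx
  choose q hq hqs hxq using fun m => (h𝒜 m).exists_mem_side_eq 0 x
  simp only [zpow_zero] at hqs
  set p : EuclideanSpace ℝ (Fin n) := WithLp.toLp 2 fun i => (q i).c i
  have hpR : ∀ m, p ∈ (R m).set := fun m => hxR m p fun i => by
    have := hxq i i
    rw [hqs i] at this
    rw [abs_le]
    constructor <;> simp only [p] <;> linarith
  choose Q hQ hQs hpQ using fun m => (h𝒜 m).exists_mem_side_eq 0 p
  simp only [zpow_zero] at hQs
  refine ⟨Q, fun m => ⟨hQ m, hQs m⟩, p, Set.mem_iInter.2 fun m => ?_⟩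
  have hsub {C : Cube n} (hC : C ∈ 𝒜 m) (hCs : C.s = 1) {w : EuclideanSpace ℝ (Fin n)}
      (hwC : w ∈ C.set) (hwR : w ∈ (R m).set) : C.set ⊆ (R m).set :=
    (h𝒜 m).subset_of_side_le hC (hR m) (hCs ▸ hR1 m) hwC hwR
  exact (Q m).mem_frontier_of_apply_eq (hpQ m) ((h𝒜 m).c_eq_of_subset_of_mem_Ico (hQ m) (hq m)
    (hR m) (hsub (hQ m) (hQs m) (hpQ m) (hpR m)) (hsub (hq m) (hqs m) (hxq m) (hxR m x (by simp)))
    (by rw [hqs, hQs]) m (hpQ m m))
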